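/- The leave-one-out error in RBF interpolation admits the closed form e_i = f_i − R^{(i)}(x_i) = c_i / (A^{-1})_{ii}, where c = A^{-1} f is the coefficient vector of the full interpolant, A is the (invertible, symmetric positive definite) interpolation matrix, and R^{(i)} is the interpolant constructed from all data points except the i-th. -/

import Mathlib

/-!
Extend the coefficients of the leave-one-out interpolant by zero at `i` to a vector `u`. Then
`A u` agrees with `f` except in the `i`-th entry, where it falls short by exactly the
leave-one-out error `e`; that is, `f = A u + e δᵢ`. Applying `A⁻¹` gives `c = u + e A⁻¹ δᵢ`, whose
`i`-th entry is `c i = e (A⁻¹)ᵢᵢ`, and `(A⁻¹)ᵢᵢ > 0` because `A⁻¹` is positive definite.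
-/

namespace Matrix

variable {n R : Type*} [Fintype n] [DecidableEq n]

theorem mulVec_extendByZero_apply [NonUnitalNonAssocCommSemiring R] (A : Matrix n n R) (i j : n)
    (v : {k // k ≠ i} → R) :
    (A *ᵥ fun k => if h : k = i then 0 else v ⟨k, h⟩) j = ∑ k : {k // k ≠ i}, v k * A j k := by
  rw [mulVec, dotProduct, Fintype.sum_eq_add_sum_subtype_ne _ i]
  simp only [dite_true, mul_zero, zero_add]
  refine Finset.sum_congr rfl fun k _ => ?_
  rw [dif_neg k.2, mul_comm]

theorem inv_mulVec_mulVec_add_single_apply [CommRing R] {A : Matrix n n R} (hA : IsUnit A.det)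
    {u : n → R} {i : n} (hu : u i = 0) (e : R) :
    (A⁻¹ *ᵥ (A *ᵥ u + Pi.single i e)) i = e * A⁻¹ i i := by
  rw [mulVec_add, mulVec_mulVec, nonsing_inv_mul A hA, one_mulVec, mulVec_single]
  simp [hu]

theorem sub_sum_mul_eq_inv_mulVec_div [Field R] {A : Matrix n n R} (hA : IsUnit A.det) {i : n}
    (hii : A⁻¹ i i ≠ 0) (f : n → R) (v : {k // k ≠ i} → R)
    (hv : ∀ j : {j // j ≠ i}, ∑ k : {k // k ≠ i}, v k * A j k = f j) :
    f i - ∑ k : {k // k ≠ i}, v k * A i k = (A⁻¹ *ᵥ f) i / A⁻¹ i i := by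
  set u : n → R := fun k => if h : k = i then 0 else v ⟨k, h⟩
  set e := f i - ∑ k : {k // k ≠ i}, v k * A i k
  have hf : f = A *ᵥ u + Pi.single i e := by
    funext j
    rw [Pi.add_apply, mulVec_extendByZero_apply]
    by_cases hj : j = i
    · subst hj
      rw [Pi.single_eq_same]
      ring
    · rw [Pi.single_eq_of_ne hj, add_zero, hv ⟨j, hj⟩]
  rw [hf, inv_mulVec_mulVec_add_single_apply hA (dif_pos rfl), mul_div_cancel_right₀ _ hii]

end Matrix

theorem stmt_8_general {M N : ℕ} (φ : ℝ → ℝ)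
    (x : Fin N → EuclideanSpace ℝ (Fin M))
    (A : Matrix (Fin N) (Fin N) ℝ)
    (hA : ∀ i k, A i k = φ ‖x i - x k‖)
    (hpd : A.PosDef) (f : Fin N → ℝ)
    (c : Fin N → ℝ) (hc : c = A⁻¹.mulVec f)
    (i : Fin N) (c' : {k : Fin N // k ≠ i} → ℝ)
    (hc' : ∀ j : {j : Fin N // j ≠ i}, ∑ k : {k : Fin N // k ≠ i},
      c' k * φ ‖x j.1 - x k.1‖ = f j.1) :
    f i - ∑ k : {k : Fin N // k ≠ i}, c' k * φ ‖x i - x k.1‖ =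
      c i / A⁻¹ i i := by
  subst hc
  simp only [← hA] at hc' ⊢
  exact Matrix.sub_sum_mul_eq_inv_mulVec_div (isUnit_iff_ne_zero.mpr hpd.det_pos.ne')
    hpd.inv.diag_pos.ne' f c' hc'

/-- Rippa's formula: the leave-one-out error equals c_i / (A⁻¹)_{ii}. -/
theorem stmt_8 {M N : ℕ} (φ : ℝ → ℝ)
    (x : Fin N → EuclideanSpace ℝ (Fin M)) (hx : Function.Injective x)
    (A : Matrix (Fin N) (Fin N) ℝ)
    (hA : ∀ i k, A i k = φ ‖x i - x k‖)
    (hpd : A.PosDef) (f : Fin N → ℝ)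
    (c : Fin N → ℝ) (hc : c = A⁻¹.mulVec f)
    (i : Fin N) (c' : {k : Fin N // k ≠ i} → ℝ)
    (hc' : ∀ j : {j : Fin N // j ≠ i}, ∑ k : {k : Fin N // k ≠ i},
      c' k * φ ‖x j.1 - x k.1‖ = f j.1) :
    f i - ∑ k : {k : Fin N // k ≠ i}, c' k * φ ‖x i - x k.1‖ =
      c i / A⁻¹ i i :=
  stmt_8_general φ x A hA hpd f c hc i c' hc'
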